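/- arXiv:2411.17951 — 2 statements merged into one kernel-verified Lean document; each statement's English description precedes it below -/
import Mathlib

section
/- Let A, B, C > 0 and 2 < σ < τ be real numbers, and define h(t) = (A/2)t² − B t^σ + C t^τ for t > 0. If there exists t₀ > 0 with h(t₀) < 0, then there exist 0 < t₁ < t₂ such that h(t₁) = h(t₂) = 0, h(t) > 0 for t ∈ (0, t₁) ∪ (t₂, ∞), and h(t) < 0 for t ∈ (t₁, t₂). -/
open Real Set

/-!
Substituting `s = t ^ (σ - 2)` gives `h t = t ^ 2 * φ s` with
`φ s = A / 2 - B * s + C * s ^ ((τ - 2) / (σ - 2))`, which is strictly convex on `[0, ∞)`,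
positive at `0` and near `∞`, and negative somewhere. By the intermediate value theorem it has a
zero on each side of that point, and strict convexity forces `φ` below the chord between two zeros
and above it outside them, which is the claimed sign pattern.
-/

open Filter

def HasSignsPosNegPos (f : ℝ → ℝ) (t₁ t₂ : ℝ) : Prop :=
  0 < t₁ ∧ t₁ < t₂ ∧ f t₁ = 0 ∧ f t₂ = 0 ∧
    (∀ t : ℝ, 0 < t → t < t₁ → 0 < f t) ∧ (∀ t : ℝ, t₂ < t → 0 < f t) ∧
    (∀ t : ℝ, t₁ < t → t < t₂ → f t < 0)

section StrictConvex

variable {s : Set ℝ} {f : ℝ → ℝ} {x y z : ℝ}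

theorem StrictConvexOn.neg_of_mem_Ioo_of_eq_zero (hf : StrictConvexOn ℝ s f) (hx : x ∈ s)
    (hy : y ∈ s) (hfx : f x = 0) (hfy : f y = 0) (hz : z ∈ Ioo x y) : f z < 0 := by
  have hxy : x < y := hz.1.trans hz.2
  simpa [hfx, hfy] using hf.lt_on_openSegment hx hy hxy.ne (by rwa [openSegment_eq_Ioo hxy])

theorem StrictConvexOn.pos_of_lt_of_eq_zero (hf : StrictConvexOn ℝ s f) (hz : z ∈ s)
    (hy : y ∈ s) (hfx : f x = 0) (hfy : f y = 0) (hzx : z < x) (hxy : x < y) : 0 < f z := by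
  have hzy : z < y := hzx.trans hxy
  have := hf.lt_on_openSegment hz hy hzy.ne (by rw [openSegment_eq_Ioo hzy]; exact ⟨hzx, hxy⟩)
  simpa [hfx, hfy] using this

theorem StrictConvexOn.pos_of_gt_of_eq_zero (hf : StrictConvexOn ℝ s f) (hx : x ∈ s)
    (hz : z ∈ s) (hfx : f x = 0) (hfy : f y = 0) (hxy : x < y) (hyz : y < z) : 0 < f z := by
  have hxz : x < z := hxy.trans hyz
  have := hf.lt_on_openSegment hx hz hxz.ne (by rw [openSegment_eq_Ioo hxz]; exact ⟨hxy, hyz⟩)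
  simpa [hfx, hfy] using this

theorem StrictConvexOn.exists_hasSignsPosNegPos (hf : StrictConvexOn ℝ (Ici 0) f)
    (hcont : ContinuousOn f (Ici 0)) (h₀ : 0 < f 0) {s₀ : ℝ} (hs₀ : 0 ≤ s₀) (hfs₀ : f s₀ < 0)
    (htop : ∀ᶠ s in atTop, 0 < f s) : ∃ s₁ s₂, HasSignsPosNegPos f s₁ s₂ := by
  obtain ⟨S, hfS, hS⟩ := (htop.and (eventually_gt_atTop s₀)).exists
  obtain ⟨s₁, ⟨hs₁, hs₁s₀⟩, hfs₁⟩ := intermediate_value_Ioo' hs₀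
    (hcont.mono Icc_subset_Ici_self) ⟨hfs₀, h₀⟩
  obtain ⟨s₂, ⟨hs₀s₂, hs₂S⟩, hfs₂⟩ := intermediate_value_Ioo hS.le
    (hcont.mono fun s hs => hs₀.trans hs.1) ⟨hfs₀, hfS⟩
  have hs₂ : 0 ≤ s₂ := hs₀.trans hs₀s₂.le
  refine ⟨s₁, s₂, hs₁, hs₁s₀.trans hs₀s₂, hfs₁, hfs₂, fun t ht hts₁ => ?_, fun t hts₂ => ?_,
    fun t hs₁t hts₂ => hf.neg_of_mem_Ioo_of_eq_zero hs₁.le hs₂ hfs₁ hfs₂ ⟨hs₁t, hts₂⟩⟩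
  · exact hf.pos_of_lt_of_eq_zero ht.le hs₂ hfs₁ hfs₂ hts₁ (hs₁s₀.trans hs₀s₂)
  · exact hf.pos_of_gt_of_eq_zero hs₁.le (hs₂.trans hts₂.le) hfs₁ hfs₂ (hs₁s₀.trans hs₀s₂)
      hts₂

end StrictConvex

namespace HasSignsPosNegPos

variable {f g w : ℝ → ℝ} {t₁ t₂ : ℝ}

theorem comp_rpow (hf : HasSignsPosNegPos f t₁ t₂) {p : ℝ} (hp : 0 < p) :
    HasSignsPosNegPos (fun t => f (t ^ p)) (t₁ ^ p⁻¹) (t₂ ^ p⁻¹) := by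
  obtain ⟨ht₁, ht₁₂, hf₁, hf₂, hleft, hright, hmid⟩ := hf
  have ht₂ : 0 < t₂ := ht₁.trans ht₁₂
  refine ⟨rpow_pos_of_pos ht₁ _, rpow_lt_rpow ht₁.le ht₁₂ (inv_pos.2 hp), ?_, ?_,
    fun t ht htt₁ => hleft _ (rpow_pos_of_pos ht _) ?_, fun t htt₂ => hright _ ?_,
    fun t ht₁t htt₂ => hmid _ ?_ ?_⟩
  · simpa [rpow_inv_rpow ht₁.le hp.ne'] using hf₁
  · simpa [rpow_inv_rpow ht₂.le hp.ne'] using hf₂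
  · exact (lt_rpow_inv_iff_of_pos ht.le ht₁.le hp).1 htt₁
  · have ht : 0 < t := (rpow_pos_of_pos ht₂ _).trans htt₂
    exact (rpow_inv_lt_iff_of_pos ht₂.le ht.le hp).1 htt₂
  · have ht : 0 < t := (rpow_pos_of_pos ht₁ _).trans ht₁t
    exact (rpow_inv_lt_iff_of_pos ht₁.le ht.le hp).1 ht₁t
  · have ht : 0 < t := (rpow_pos_of_pos ht₁ _).trans ht₁t
    exact (lt_rpow_inv_iff_of_pos ht.le ht₂.le hp).1 htt₂

theorem of_eq_mul (hf : HasSignsPosNegPos f t₁ t₂) (hw : ∀ t, 0 < t → 0 < w t)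
    (hg : ∀ t, 0 < t → g t = w t * f t) : HasSignsPosNegPos g t₁ t₂ := by
  obtain ⟨ht₁, ht₁₂, hf₁, hf₂, hleft, hright, hmid⟩ := hf
  have ht₂ : 0 < t₂ := ht₁.trans ht₁₂
  refine ⟨ht₁, ht₁₂, by simp [hg _ ht₁, hf₁], by simp [hg _ ht₂, hf₂], fun t ht htt₁ => ?_,
    fun t htt₂ => ?_, fun t ht₁t htt₂ => ?_⟩
  · rw [hg _ ht]; exact mul_pos (hw _ ht) (hleft _ ht htt₁)
  · have ht := ht₂.trans htt₂
    rw [hg _ ht]; exact mul_pos (hw _ ht) (hright _ htt₂)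
  · have ht := ht₁.trans ht₁t
    rw [hg _ ht]; exact mul_neg_of_pos_of_neg (hw _ ht) (hmid _ ht₁t htt₂)

end HasSignsPosNegPos

section AffineAddRpow

variable (a b : ℝ) {c r : ℝ}

theorem strictConvexOn_sub_mul_add_mul_rpow (hc : 0 < c) (hr : 1 < r) :
    StrictConvexOn ℝ (Ici 0) (fun s => a - b * s + c * s ^ r) := by
  refine ⟨convex_Ici 0, fun x hx y hy hxy u v hu hv huv => ?_⟩
  have key := (strictConvexOn_rpow hr).2 hx hy hxy hu hv huv
  simp only [smul_eq_mul] at key ⊢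
  have ha : a = u * a + v * a := by rw [← add_mul, huv, one_mul]
  nlinarith [mul_lt_mul_of_pos_left key hc]

theorem continuous_sub_mul_add_mul_rpow (hr : 0 ≤ r) :
    Continuous (fun s => a - b * s + c * s ^ r) := by
  have := continuous_rpow_const hr
  fun_prop

theorem eventually_pos_sub_mul_add_mul_rpow (hc : 0 < c) (hr : 1 < r) :
    ∀ᶠ s in atTop, 0 < a - b * s + c * s ^ r := by
  have hlin : Tendsto (fun s : ℝ => c * s ^ (r - 1) - b) atTop atTop :=
    tendsto_atTop_add_const_right _ _ ((tendsto_rpow_atTop (by linarith)).const_mul_atTop hc)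
  have hlim := (tendsto_id.atTop_mul_atTop₀ hlin).atTop_add (tendsto_const_nhds (x := a))
  filter_upwards [hlim.eventually_gt_atTop 0, eventually_gt_atTop 0] with s hs hs₀
  have hexpand : id s * (c * s ^ (r - 1) - b) + a = a - b * s + c * s ^ r := by
    rw [rpow_sub_one hs₀.ne', id]
    field_simp
    ring
  linarith

end AffineAddRpow

theorem rpow_eq_sq_mul_rpow_sub_two {t : ℝ} (ht : 0 < t) (a : ℝ) :
    t ^ a = t ^ 2 * t ^ (a - 2) := by
  rw [← rpow_natCast, ← rpow_add ht]
  norm_num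

theorem stmt_3_general (A B C σ τ : ℝ) (hA : 0 < A) (hC : 0 < C)
    (hσ : 2 < σ) (hστ : σ < τ)
    (h : ∃ t₀ : ℝ, 0 < t₀ ∧ (A / 2) * t₀ ^ 2 - B * t₀ ^ σ + C * t₀ ^ τ < 0) :
    ∃ t₁ t₂ : ℝ, 0 < t₁ ∧ t₁ < t₂ ∧
      (A / 2) * t₁ ^ 2 - B * t₁ ^ σ + C * t₁ ^ τ = 0 ∧
      (A / 2) * t₂ ^ 2 - B * t₂ ^ σ + C * t₂ ^ τ = 0 ∧
      (∀ t : ℝ, 0 < t → t < t₁ → 0 < (A / 2) * t ^ 2 - B * t ^ σ + C * t ^ τ) ∧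
      (∀ t : ℝ, t₂ < t → 0 < (A / 2) * t ^ 2 - B * t ^ σ + C * t ^ τ) ∧
      (∀ t : ℝ, t₁ < t → t < t₂ → (A / 2) * t ^ 2 - B * t ^ σ + C * t ^ τ < 0) := by
  obtain ⟨t₀, ht₀, hneg⟩ := h
  set p := σ - 2
  set r := (τ - 2) / p
  have hp : 0 < p := by linarith
  have hr : 1 < r := by rw [one_lt_div hp]; linarith
  have hfactor : ∀ t, 0 < t → (A / 2) * t ^ 2 - B * t ^ σ + C * t ^ τ =
      t ^ 2 * (A / 2 - B * t ^ p + C * (t ^ p) ^ r) := by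
    intro t ht
    rw [← rpow_mul ht.le, mul_div_cancel₀ _ hp.ne', rpow_eq_sq_mul_rpow_sub_two ht σ,
      rpow_eq_sq_mul_rpow_sub_two ht τ]
    ring
  have hφ₀ : 0 < A / 2 - B * 0 + C * 0 ^ r := by
    rw [zero_rpow (zero_lt_one.trans hr).ne']
    linarith
  have hφt₀ : A / 2 - B * t₀ ^ p + C * (t₀ ^ p) ^ r < 0 :=
    (pos_iff_neg_of_mul_neg (hfactor t₀ ht₀ ▸ hneg)).1 (by positivity)
  obtain ⟨s₁, s₂, hφ⟩ :=
    (strictConvexOn_sub_mul_add_mul_rpow (A / 2) B hC hr).exists_hasSignsPosNegPos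
    (continuous_sub_mul_add_mul_rpow _ _ (zero_lt_one.trans hr).le).continuousOn hφ₀
    (rpow_nonneg ht₀.le p) hφt₀ (eventually_pos_sub_mul_add_mul_rpow _ _ hC hr)
  exact ⟨_, _, (hφ.comp_rpow hp).of_eq_mul (w := fun t => t ^ 2) (fun t ht => by positivity)
    hfactor⟩

theorem stmt_3 (A B C σ τ : ℝ) (hA : 0 < A) (hB : 0 < B) (hC : 0 < C)
    (hσ : 2 < σ) (hστ : σ < τ)
    (h : ∃ t₀ : ℝ, 0 < t₀ ∧ (A / 2) * t₀ ^ 2 - B * t₀ ^ σ + C * t₀ ^ τ < 0) :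
    ∃ t₁ t₂ : ℝ, 0 < t₁ ∧ t₁ < t₂ ∧
      (A / 2) * t₁ ^ 2 - B * t₁ ^ σ + C * t₁ ^ τ = 0 ∧
      (A / 2) * t₂ ^ 2 - B * t₂ ^ σ + C * t₂ ^ τ = 0 ∧
      (∀ t : ℝ, 0 < t → t < t₁ → 0 < (A / 2) * t ^ 2 - B * t ^ σ + C * t ^ τ) ∧
      (∀ t : ℝ, t₂ < t → 0 < (A / 2) * t ^ 2 - B * t ^ σ + C * t ^ τ) ∧
      (∀ t : ℝ, t₁ < t → t < t₂ → (A / 2) * t ^ 2 - B * t ^ σ + C * t ^ τ < 0) :=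
  stmt_3_general A B C σ τ hA hC hσ hστ h
end

section
/- Let 2 < q < p, a > 0, and suppose u : Ω → ℝ satisfies ∫_Ω |u|² = a and the energy bound E := −(1/q)∫_Ω |u|^q + (1/p)∫_Ω |u|^p. Then E ≥ −(a(p−q))/(q(p−2)) · (p(q−2)/(q(p−2)))^{(q−2)/(p−q)}. In particular the functional u ↦ −(1/q)‖u‖_q^q + (1/p)‖u‖_p^p is bounded below on {u : ‖u‖₂² = a} by this explicit constant. -/
open Real MeasureTheory

lemma scalar_key (p q : ℝ) (hq : 2 < q) (hqp : q < p) (s : ℝ) (hs : 0 ≤ s) :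
    (1/q) * s ^ q ≤ (1/p) * s ^ p
      + ((p - q) / (q * (p - 2)) * (p * (q - 2) / (q * (p - 2))) ^ ((q - 2) / (p - q))) * s ^ (2:ℝ) := by
  have hq0 : (0:ℝ) < q := by linarith
  have hp0 : (0:ℝ) < p := by linarith
  have hp2 : (0:ℝ) < p - 2 := by linarith
  have hq2 : (0:ℝ) < q - 2 := by linarith
  have hpq : (0:ℝ) < p - q := by linarith
  set r : ℝ := p * (q - 2) / (q * (p - 2)) with hr_def
  have hr : 0 < r := by positivity
  set e : ℝ := (q - 2) / (p - q) with he_def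
  rcases hs.eq_or_lt with h | h
  · subst_vars
    rw [Real.zero_rpow (by positivity), Real.zero_rpow (by positivity),
      Real.zero_rpow (by norm_num)]
    norm_num
  · set θ : ℝ := (q - 2) / (p - 2) with hθ_def
    have hθ0 : 0 ≤ θ := by positivity
    have hθ1 : 0 ≤ 1 - θ := by
      rw [hθ_def]
      rw [sub_nonneg, div_le_one hp2]
      linarith
    have hgm := Real.geom_mean_le_arith_mean2_weighted hθ0 hθ1
      (p₁ := s ^ (p - 2) / r) (p₂ := r ^ e) (by positivity) (by positivity) (by ring)
    have hLHS : (s ^ (p - 2) / r) ^ θ * (r ^ e) ^ (1 - θ) = s ^ (q - 2) := by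
      have h1 : (p - 2) * θ = q - 2 := by
        rw [hθ_def]; field_simp
      have h2 : e * (1 - θ) = θ := by
        rw [he_def, hθ_def]; field_simp; ring
      rw [Real.div_rpow (by positivity) hr.le, ← Real.rpow_mul h.le,
        ← Real.rpow_mul hr.le, h1, h2, div_mul_cancel₀ _ (by positivity)]
    rw [hLHS] at hgm
    have hθr : θ * (s ^ (p - 2) / r) = (q / p) * s ^ (p - 2) := by
      rw [hθ_def, hr_def]
      field_simp
    rw [hθr] at hgm
    have h1θ : 1 - θ = (p - q) / (p - 2) := by
      rw [hθ_def]; field_simp; ring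
    rw [h1θ] at hgm
    -- hgm : s ^ (q-2) ≤ q/p * s^(p-2) + (p-q)/(p-2) * r^e
    have hs2 : (0:ℝ) < s ^ (2:ℝ) := by positivity
    have hkey := mul_le_mul_of_nonneg_right hgm hs2.le
    have hq' : s ^ (q - 2) * s ^ (2:ℝ) = s ^ q := by
      rw [← Real.rpow_add h]; ring_nf
    have hp' : s ^ (p - 2) * s ^ (2:ℝ) = s ^ p := by
      rw [← Real.rpow_add h]; ring_nf
    rw [add_mul, hq', mul_assoc, hp'] at hkey
    -- hkey : s^q ≤ q/p * s^p + (p-q)/(p-2)*r^e * s^2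
    have := mul_le_mul_of_nonneg_left hkey (le_of_lt (by positivity : (0:ℝ) < 1/q))
    calc (1/q) * s ^ q ≤ (1/q) * (q / p * s ^ p + (p - q) / (p - 2) * r ^ e * s ^ (2:ℝ)) := this
      _ = (1/p) * s ^ p + ((p - q) / (q * (p - 2)) * r ^ e) * s ^ (2:ℝ) := by
          field_simp

theorem stmt_16 (N : ℕ) (p q a : ℝ) (hq : 2 < q) (hqp : q < p) (ha : 0 < a)
    (Ω : Set (Fin N → ℝ)) (hΩ : MeasurableSet Ω)
    (u : (Fin N → ℝ) → ℝ)
    (hu2 : MemLp u 2 (volume.restrict Ω))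
    (hup : MemLp u (ENNReal.ofReal p) (volume.restrict Ω))
    (hm : ∫ x in Ω, |u x| ^ (2 : ℝ) = a) :
    -(a * (p - q)) / (q * (p - 2)) * (p * (q - 2) / (q * (p - 2))) ^ ((q - 2) / (p - q)) ≤
      -(1 / q) * (∫ x in Ω, |u x| ^ q) + (1 / p) * (∫ x in Ω, |u x| ^ p) := by
  have hq0 : (0:ℝ) < q := by linarith
  have hp0 : (0:ℝ) < p := by linarith
  set μ := volume.restrict Ω
  set r : ℝ := p * (q - 2) / (q * (p - 2)) with hr_def
  set e : ℝ := (q - 2) / (p - q) with he_def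
  set c : ℝ := (p - q) / (q * (p - 2)) * r ^ e with hc_def
  -- integrability
  have h2 : Integrable (fun x => |u x| ^ (2:ℝ)) μ := by
    have := hu2.integrable_norm_rpow (by norm_num) (by norm_num)
    simpa [Real.norm_eq_abs, ENNReal.toReal_ofNat] using this
  have hpInt : Integrable (fun x => |u x| ^ p) μ := by
    have := hup.integrable_norm_rpow (by simp [hp0]) (by simp)
    simpa [Real.norm_eq_abs, ENNReal.toReal_ofReal hp0.le] using this
  have hmeasq : AEStronglyMeasurable (fun x => |u x| ^ q) μ := by
    have := hu2.aestronglyMeasurable.norm.aemeasurable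
    exact (this.pow_const q).aestronglyMeasurable.congr
      (Filter.Eventually.of_forall fun x => by simp [Real.norm_eq_abs])
  have hqInt : Integrable (fun x => |u x| ^ q) μ := by
    apply Integrable.mono' (h2.add hpInt) hmeasq
    filter_upwards with x
    simp only [Pi.add_apply]
    rw [Real.norm_eq_abs, abs_of_nonneg (by positivity)]
    rcases le_or_gt (|u x|) 1 with hx | hx
    · have h1 : |u x| ^ q ≤ |u x| ^ (2:ℝ) := by
        rcases eq_or_lt_of_le (abs_nonneg (u x)) with h0 | h0
        · rw [← h0, Real.zero_rpow (by positivity), Real.zero_rpow (by norm_num)]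
        · exact Real.rpow_le_rpow_of_exponent_ge h0 hx (by linarith)
      have h2' : (0:ℝ) ≤ |u x| ^ p := by positivity
      linarith
    · have h1 : |u x| ^ q ≤ |u x| ^ p :=
        Real.rpow_le_rpow_of_exponent_le hx.le hqp.le
      have h2' : (0:ℝ) ≤ |u x| ^ (2:ℝ) := by positivity
      linarith
  -- pointwise inequality integrated
  have hmono : ∫ x in Ω, (1/q) * |u x| ^ q ≤
      ∫ x in Ω, ((1/p) * |u x| ^ p + c * |u x| ^ (2:ℝ)) := by
    apply integral_mono (hqInt.const_mul _) ((hpInt.const_mul _).add (h2.const_mul _))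
    intro x
    exact scalar_key p q hq hqp (|u x|) (abs_nonneg _)
  rw [integral_const_mul, integral_add (hpInt.const_mul _) (h2.const_mul _),
    integral_const_mul, integral_const_mul, hm] at hmono
  have hgoal : -(a * (p - q)) / (q * (p - 2)) * r ^ e = -(c * a) := by
    rw [hc_def]; ring
  rw [hgoal]
  linarith
end
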